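/- Let d₁, d₂ ≥ 2 and let x : Fin d₁ → ℝ and y : Fin d₂ → ℝ have all entries nonzero. Then e_{d₁·d₂ − 2}(x ⊗ y) = e_{d₁}(x)^{d₂} · e_{d₂}(y)^{d₁} · [ (e_{d₁−1}(x)/e_{d₁}(x))² · (e_{d₂−2}(y)/e_{d₂}(y)) + (e_{d₁−2}(x)/e_{d₁}(x)) · (e_{d₂−1}(y)/e_{d₂}(y))² − 2 · (e_{d₁−2}(x)/e_{d₁}(x)) · (e_{d₂−2}(y)/e_{d₂}(y)) ]. -/

import Mathlib

/-!
Inverting the entries complements index sets: `e_{n-k}(z) = e_n(z) · e_k(z⁻¹)`. Since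
`(x ⊗ y)⁻¹ = x⁻¹ ⊗ y⁻¹`, both sides become `e_2` of a tensor product (the bracket is the formula
for `e_2(x⁻¹ ⊗ y⁻¹)`), and `e_2` is determined by Newton's identity `p_2 = e_1² - 2 e_2`, where
the power sums `p_1, p_2` are multiplicative under `⊗`.
-/
open Finset

/-- The `k`-th elementary symmetric polynomial of the entries of `x`. -/
noncomputable def esym {ι : Type*} [Fintype ι] (k : ℕ) (x : ι → ℝ) : ℝ :=
  ∑ S ∈ Finset.univ.powersetCard k, ∏ i ∈ S, x i

/-- Tensor (Kronecker) product of two vectors. -/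
def tensor {d₁ d₂ : ℕ} (x : Fin d₁ → ℝ) (y : Fin d₂ → ℝ) : Fin d₁ × Fin d₂ → ℝ :=
  fun p => x p.1 * y p.2

section
variable {ι : Type*} [Fintype ι]

lemma eval_esymm_eq_esym (k : ℕ) (z : ι → ℝ) :
    MvPolynomial.eval z (MvPolynomial.esymm ι ℝ k) = esym k z := by
  rw [← MvPolynomial.coe_aeval_eq_eval]
  exact (MvPolynomial.aeval_esymm_eq_multiset_esymm ι ℝ k z).trans (Finset.esymm_map_val _ _ _)

lemma esym_one (z : ι → ℝ) : esym 1 z = ∑ i, z i := by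
  simp [esym, powersetCard_one]

lemma sum_sq_eq_esym (z : ι → ℝ) : ∑ i, z i ^ 2 = esym 1 z ^ 2 - 2 * esym 2 z := by
  open MvPolynomial in
  have newton : 2 * esymm ι ℝ 2 = (∑ i, X i) ^ 2 - psum ι ℝ 2 := by
    have := mul_esymm_eq_sum ι ℝ 2
    simp only [Nat.sum_antidiagonal_eq_sum_range_succ_mk, sum_filter, sum_range_succ, range_zero,
      sum_empty, Nat.reduceLT, Nat.reduceSub, Nat.lt_irrefl, ↓reduceIte, esymm_zero, esymm_one,
      psum_one] at this
    linear_combination this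
  have := congrArg (MvPolynomial.eval z) newton
  simp only [map_mul, map_sub, map_pow, map_sum, MvPolynomial.eval_X, MvPolynomial.eval_ofNat,
    eval_esymm_eq_esym, MvPolynomial.psum] at this
  rw [esym_one]
  linear_combination this

lemma esym_card (z : ι → ℝ) : esym (Fintype.card ι) z = ∏ i, z i := by
  rw [esym, ← card_univ, powersetCard_self, sum_singleton]

lemma esym_card_sub [DecidableEq ι] {k : ℕ} (hk : k ≤ Fintype.card ι) {z : ι → ℝ}
    (hz : ∀ i, z i ≠ 0) : esym (Fintype.card ι - k) z = (∏ i, z i) * esym k z⁻¹ := by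
  rw [esym, esym, mul_sum]
  refine sum_nbij' compl compl (fun S hS ↦ ?_) (fun S hS ↦ ?_) (fun S _ ↦ compl_compl S)
    (fun S _ ↦ compl_compl S) (fun S _ ↦ ?_)
  · simp_all [card_compl, Nat.sub_sub_self hk]
  · simp_all [card_compl]
  · have : ∏ i ∈ Sᶜ, z i ≠ 0 := prod_ne_zero_iff.mpr fun i _ ↦ hz i
    rw [← prod_mul_prod_compl Sᶜ z, compl_compl, Pi.inv_def, prod_inv_distrib]
    field_simp

lemma esym_card_sub_div_esym_card [DecidableEq ι] {k : ℕ} (hk : k ≤ Fintype.card ι)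
    {z : ι → ℝ} (hz : ∀ i, z i ≠ 0) :
    esym (Fintype.card ι - k) z / esym (Fintype.card ι) z = esym k z⁻¹ := by
  rw [esym_card_sub hk hz, esym_card, mul_div_cancel_left₀ _ (prod_ne_zero_iff.mpr fun i _ ↦ hz i)]

end

section
variable {d₁ d₂ : ℕ}

lemma tensor_inv (x : Fin d₁ → ℝ) (y : Fin d₂ → ℝ) : (tensor x y)⁻¹ = tensor x⁻¹ y⁻¹ := by
  ext p; simp [tensor, mul_comm]

lemma sum_tensor (x : Fin d₁ → ℝ) (y : Fin d₂ → ℝ) :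
    ∑ p, tensor x y p = (∑ i, x i) * ∑ j, y j := by
  rw [Fintype.sum_prod_type, sum_mul_sum]; rfl

lemma prod_tensor (x : Fin d₁ → ℝ) (y : Fin d₂ → ℝ) :
    ∏ p, tensor x y p = (∏ i, x i) ^ d₂ * (∏ j, y j) ^ d₁ := by
  simp [Fintype.prod_prod_type, tensor, prod_mul_distrib, prod_pow]

lemma esym_two_tensor (x : Fin d₁ → ℝ) (y : Fin d₂ → ℝ) :
    esym 2 (tensor x y) = esym 1 x ^ 2 * esym 2 y + esym 2 x * esym 1 y ^ 2
      - 2 * esym 2 x * esym 2 y := by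
  have h := sum_sq_eq_esym (tensor x y)
  have hsq : ∑ p, tensor x y p ^ 2 = (∑ i, x i ^ 2) * ∑ j, y j ^ 2 := by
    rw [← sum_tensor]; simp [tensor, mul_pow]
  rw [hsq, sum_sq_eq_esym x, sum_sq_eq_esym y, esym_one (tensor x y), sum_tensor, ← esym_one x,
    ← esym_one y] at h
  linear_combination h / 2

end

theorem esym_thirdTop_tensor (d₁ d₂ : ℕ) (h₁ : 2 ≤ d₁) (h₂ : 2 ≤ d₂)
    (x : Fin d₁ → ℝ) (y : Fin d₂ → ℝ)
    (hx : ∀ i, x i ≠ 0) (hy : ∀ j, y j ≠ 0) :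
    esym (d₁ * d₂ - 2) (tensor x y) =
      (esym d₁ x) ^ d₂ * (esym d₂ y) ^ d₁ *
        ((esym (d₁ - 1) x / esym d₁ x) ^ 2 * (esym (d₂ - 2) y / esym d₂ y)
          + (esym (d₁ - 2) x / esym d₁ x) * (esym (d₂ - 1) y / esym d₂ y) ^ 2
          - 2 * (esym (d₁ - 2) x / esym d₁ x) * (esym (d₂ - 2) y / esym d₂ y)) := by
  have hxk (k : ℕ) (hk : k ≤ d₁) : esym (d₁ - k) x / esym d₁ x = esym k x⁻¹ := by
    simpa using esym_card_sub_div_esym_card (by simpa using hk) hx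
  have hyk (k : ℕ) (hk : k ≤ d₂) : esym (d₂ - k) y / esym d₂ y = esym k y⁻¹ := by
    simpa using esym_card_sub_div_esym_card (by simpa using hk) hy
  have hxy : esym (d₁ * d₂ - 2) (tensor x y) = (∏ p, tensor x y p) * esym 2 (tensor x y)⁻¹ := by
    have h₁₂ : 2 ≤ d₁ * d₂ := h₁.trans (Nat.le_mul_of_pos_right d₁ (by omega))
    simpa using esym_card_sub (z := tensor x y) (by simpa using h₁₂)
      fun p ↦ mul_ne_zero (hx p.1) (hy p.2)
  have hx_top : esym d₁ x = ∏ i, x i := by simpa using esym_card x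
  have hy_top : esym d₂ y = ∏ j, y j := by simpa using esym_card y
  rw [hxy, tensor_inv, esym_two_tensor, prod_tensor, hxk 1 (by omega), hxk 2 h₁,
    hyk 1 (by omega), hyk 2 h₂, hx_top, hy_top]
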